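/- arXiv:0710.1892 — 4 statements merged into one kernel-verified Lean document; each statement's English description precedes it below -/
import Mathlib

section
/- Let G = A *_C B be an amalgamated free product. Suppose η_A : Â → A and η_B : B̂ → B are epimorphisms, and Ĉ_A ≤ Â, Ĉ_B ≤ B̂ are subgroups with η_A(Ĉ_A) = C = η_B(Ĉ_B), together with an isomorphism Ĉ_A ≅ Ĉ_B compatible with η_A, η_B. If every homomorphism Â → Γ factors through η_A and every homomorphism B̂ → Γ factors through η_B, then every homomorphism from Ĝ = Â *_{Ĉ_A = Ĉ_B} B̂ to Γ factors through the induced epimorphism Ĝ → G. -/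
/-!
Restricted to `Ahat` and `Bhat`, a homomorphism `f : Ghat →* Γ` factors as `α ∘ ηA` and `β ∘ ηB`.
Since `ηC` is onto, `α` and `β` agree on `C` because `f` agrees on the two copies of `Chat`;
so they glue to `h : G →* Γ`, and `f = h ∘ π` because both sides agree on the generating
factors `Ahat` and `Bhat` of `Ghat`.
-/

theorem MonoidHom.comp_eq_comp_of_lift {C A B Chat Ahat Bhat Ghat Γ : Type*}
    [MulOneClass C] [MulOneClass A] [MulOneClass B] [MulOneClass Chat] [MulOneClass Ahat]
    [MulOneClass Bhat] [MulOneClass Ghat] [MulOneClass Γ]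
    {iA : C →* A} {iB : C →* B} {iAhat : Chat →* Ahat} {iBhat : Chat →* Bhat}
    {jAhat : Ahat →* Ghat} {jBhat : Bhat →* Ghat} (hcommhat : jAhat.comp iAhat = jBhat.comp iBhat)
    {ηA : Ahat →* A} {ηB : Bhat →* B} {ηC : Chat →* C} (hηC : Function.Surjective ηC)
    (hcompA : ηA.comp iAhat = iA.comp ηC) (hcompB : ηB.comp iBhat = iB.comp ηC)
    {f : Ghat →* Γ} {α : A →* Γ} {β : B →* Γ}
    (hα : f.comp jAhat = α.comp ηA) (hβ : f.comp jBhat = β.comp ηB) :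
    α.comp iA = β.comp iB := by
  refine (MonoidHom.cancel_right hηC).1 ?_
  calc (α.comp iA).comp ηC = (f.comp jAhat).comp iAhat := by
        rw [hα, MonoidHom.comp_assoc, MonoidHom.comp_assoc, hcompA]
    _ = (f.comp jBhat).comp iBhat := by
        rw [MonoidHom.comp_assoc, hcommhat, MonoidHom.comp_assoc]
    _ = (β.comp iB).comp ηC := by
        rw [hβ, MonoidHom.comp_assoc, MonoidHom.comp_assoc, hcompB]

theorem stmt_1_general {C A B G Chat Ahat Bhat Ghat Γ : Type}
    [Group C] [Group A] [Group B] [Group G]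
    [Group Chat] [Group Ahat] [Group Bhat] [Group Ghat] [Group Γ]
    (iA : C →* A) (iB : C →* B) (jA : A →* G) (jB : B →* G)
    (hUPG : ∀ (H : Type) [Group H], ∀ (α : A →* H) (β : B →* H),
      α.comp iA = β.comp iB → ∃ h : G →* H, h.comp jA = α ∧ h.comp jB = β)
    (iAhat : Chat →* Ahat) (iBhat : Chat →* Bhat) (jAhat : Ahat →* Ghat)
    (jBhat : Bhat →* Ghat)
    (hcommhat : jAhat.comp iAhat = jBhat.comp iBhat)
    (hext : ∀ (H : Type) [Group H], ∀ h₁ h₂ : Ghat →* H,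
      h₁.comp jAhat = h₂.comp jAhat → h₁.comp jBhat = h₂.comp jBhat → h₁ = h₂)
    (ηA : Ahat →* A) (ηB : Bhat →* B) (ηC : Chat →* C)
    (hηC : Function.Surjective ηC)
    (hcompA : ηA.comp iAhat = iA.comp ηC) (hcompB : ηB.comp iBhat = iB.comp ηC)
    (π : Ghat →* G)
    (hπA : π.comp jAhat = jA.comp ηA) (hπB : π.comp jBhat = jB.comp ηB)
    (hfacA : ∀ f : Ahat →* Γ, ∃ g : A →* Γ, f = g.comp ηA)
    (hfacB : ∀ f : Bhat →* Γ, ∃ g : B →* Γ, f = g.comp ηB) :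
    ∀ f : Ghat →* Γ, ∃ g : G →* Γ, f = g.comp π := by
  intro f
  obtain ⟨α, hα⟩ := hfacA (f.comp jAhat)
  obtain ⟨β, hβ⟩ := hfacB (f.comp jBhat)
  obtain ⟨h, hA, hB⟩ := hUPG Γ α β
    (MonoidHom.comp_eq_comp_of_lift hcommhat hηC hcompA hcompB hα hβ)
  refine ⟨h, hext Γ f (h.comp π) ?_ ?_⟩
  · rw [MonoidHom.comp_assoc, hπA, ← MonoidHom.comp_assoc, hA, hα]
  · rw [MonoidHom.comp_assoc, hπB, ← MonoidHom.comp_assoc, hB, hβ]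

/-- A `Γ`-approximation of an amalgam can be assembled from
`Γ`-approximations of its factors.  Here `G = A *_C B` and `Ghat = Ahat *_{Chat} Bhat`
are amalgamated free products (the latter characterized by joint generation of its
factors, i.e. the uniqueness half of the universal property; the former by the
existence half), `ηA : Ahat → A`, `ηB : Bhat → B`, `ηC : Chat → C` are epimorphisms
compatible with the inclusions, and `π : Ghat → G` is the induced epimorphism.  If every
homomorphism `Ahat → Γ` factors through `ηA` and every homomorphism `Bhat → Γ` factors
through `ηB`, then every homomorphism `Ghat → Γ` factors through `π`. -/
theorem stmt_1 {C A B G Chat Ahat Bhat Ghat Γ : Type}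
    [Group C] [Group A] [Group B] [Group G]
    [Group Chat] [Group Ahat] [Group Bhat] [Group Ghat] [Group Γ]
    (iA : C →* A) (iB : C →* B) (jA : A →* G) (jB : B →* G)
    (hcomm : jA.comp iA = jB.comp iB)
    (hUPG : ∀ (H : Type) [Group H], ∀ (α : A →* H) (β : B →* H),
      α.comp iA = β.comp iB → ∃ h : G →* H, h.comp jA = α ∧ h.comp jB = β)
    (iAhat : Chat →* Ahat) (iBhat : Chat →* Bhat) (jAhat : Ahat →* Ghat)
    (jBhat : Bhat →* Ghat)
    (hcommhat : jAhat.comp iAhat = jBhat.comp iBhat)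
    (hext : ∀ (H : Type) [Group H], ∀ h₁ h₂ : Ghat →* H,
      h₁.comp jAhat = h₂.comp jAhat → h₁.comp jBhat = h₂.comp jBhat → h₁ = h₂)
    (ηA : Ahat →* A) (ηB : Bhat →* B) (ηC : Chat →* C)
    (hηA : Function.Surjective ηA) (hηB : Function.Surjective ηB)
    (hηC : Function.Surjective ηC)
    (hcompA : ηA.comp iAhat = iA.comp ηC) (hcompB : ηB.comp iBhat = iB.comp ηC)
    (π : Ghat →* G) (hπ : Function.Surjective π)
    (hπA : π.comp jAhat = jA.comp ηA) (hπB : π.comp jBhat = jB.comp ηB)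
    (hfacA : ∀ f : Ahat →* Γ, ∃ g : A →* Γ, f = g.comp ηA)
    (hfacB : ∀ f : Bhat →* Γ, ∃ g : B →* Γ, f = g.comp ηB) :
    ∀ f : Ghat →* Γ, ∃ g : G →* Γ, f = g.comp π :=
  stmt_1_general iA iB jA jB hUPG iAhat iBhat jAhat jBhat hcommhat hext ηA ηB ηC hηC hcompA hcompB π
    hπA hπB hfacA hfacB
end

section
/- Let Γ be a group such that for every sequence of group epimorphisms G₁ → G₂ → G₃ → ⋯ between finitely generated groups, the corresponding descending chain of injections Hom(G₁,Γ) ⊇ Hom(G₂,Γ) ⊇ ⋯ (via precomposition) eventually stabilizes. Then for every finitely generated group G there exists a finitely presented group Ĝ and an epimorphism η : Ĝ → G such that precomposition with η gives a bijection Hom(G,Γ) → Hom(Ĝ,Γ). -/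
/-!
Write `G = F ⧸ N` with `F` free of finite rank, enumerate the countable group `N` as
`e 0, e 1, …`, and let `S k` be the normal closure of `e 0, …, e (k-1)`. The finitely presented
groups `F ⧸ S k` form a chain of epimorphisms of finitely generated groups, so precomposition
is bijective from some `K` on. Surjectivity there means that a homomorphism `F → Γ` killing
`S K` kills every `S k`, hence all of `N`; so every homomorphism `F ⧸ S K → Γ` factors through
`G = F ⧸ N`, and `Ĝ = F ⧸ S K` works.
-/

section Precomposition

variable {H G Γ : Type*} [Group H] [Group G] [Group Γ]

theorem MonoidHom.ker_le_ker_of_comp_surjective {η : H →* G}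
    (hη : Function.Surjective fun ψ : G →* Γ => ψ.comp η) (φ : H →* Γ) : η.ker ≤ φ.ker := by
  obtain ⟨ψ, rfl⟩ := hη φ
  exact fun x hx => by simp [MonoidHom.mem_ker.1 hx]

theorem MonoidHom.comp_bijective_of_ker_le {η : H →* G} (hη : Function.Surjective η)
    (hker : ∀ φ : H →* Γ, η.ker ≤ φ.ker) : Function.Bijective fun ψ : G →* Γ => ψ.comp η :=
  ⟨fun _ _ => (MonoidHom.cancel_right hη).1,
    fun φ => ⟨η.liftOfSurjective hη ⟨φ, hker φ⟩, η.liftOfRightInverse_comp _ _ _⟩⟩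

end Precomposition

section QuotientChain

variable {F Γ : Type*} [Group F] [Group Γ]

theorem QuotientGroup.le_ker_of_comp_map_surjective {A B : Subgroup F} [A.Normal] [B.Normal]
    (hAB : A ≤ B)
    (hsurj : Function.Surjective fun ψ : F ⧸ B →* Γ => ψ.comp (map A B (MonoidHom.id F) hAB))
    {φ : F →* Γ} (hφ : A ≤ φ.ker) : B ≤ φ.ker := by
  intro x hx
  have hmap : mk' A x ∈ (map A B (MonoidHom.id F) hAB).ker :=
    (eq_one_iff (N := B) x).2 hx
  simpa using MonoidHom.ker_le_ker_of_comp_surjective hsurj (lift A φ hφ) hmap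

theorem QuotientGroup.le_ker_of_eventually_comp_map_surjective {S : ℕ → Subgroup F}
    [∀ n, (S n).Normal] (hS : Monotone S) {K : ℕ}
    (hK : ∀ n, K ≤ n → Function.Surjective fun ψ : F ⧸ S (n + 1) →* Γ =>
      ψ.comp (map (S n) (S (n + 1)) (MonoidHom.id F) (hS n.le_succ)))
    {φ : F →* Γ} (hφ : S K ≤ φ.ker) (n : ℕ) : S n ≤ φ.ker := by
  have hge : ∀ m, K ≤ m → S m ≤ φ.ker := fun m hm => by
    induction m, hm using Nat.le_induction with
    | base => exact hφ
    | succ m hm ih => exact le_ker_of_comp_map_surjective _ (hK m hm) ih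
  exact (hS (le_max_left n K)).trans (hge _ (le_max_right n K))

theorem QuotientGroup.ker_lift_le_ker {G : Type*} [Group G] {S : Subgroup F} [S.Normal]
    {π : F →* G} (hS : S ≤ π.ker) {h : F ⧸ S →* Γ} (hπ : π.ker ≤ (h.comp (mk' S)).ker) :
    (lift S π hS).ker ≤ h.ker := by
  rwa [ker_lift, Subgroup.map_le_iff_le_comap, MonoidHom.comap_ker]

end QuotientChain

section PrefixNormalClosure

variable {F : Type*} [Group F] [DecidableEq F]

def prefixNormalClosure (e : ℕ → F) (k : ℕ) : Subgroup F :=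
  Subgroup.normalClosure ((Finset.range k).image e : Set F)

instance (e : ℕ → F) (k : ℕ) : (prefixNormalClosure e k).Normal :=
  Subgroup.normalClosure_normal

theorem prefixNormalClosure_monotone (e : ℕ → F) : Monotone (prefixNormalClosure e) :=
  fun _ _ hab => Subgroup.normalClosure_mono <| Finset.coe_subset.2 <|
    Finset.image_subset_image <| Finset.range_subset_range.2 hab

theorem mem_prefixNormalClosure_succ (e : ℕ → F) (i : ℕ) : e i ∈ prefixNormalClosure e (i + 1) :=
  Subgroup.subset_normalClosure <| by simpa using ⟨i, le_rfl, rfl⟩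

theorem prefixNormalClosure_le {e : ℕ → F} {N : Subgroup F} [N.Normal]
    (he : ∀ i, e i ∈ N) (k : ℕ) : prefixNormalClosure e k ≤ N :=
  Subgroup.normalClosure_le_normal <| by simpa [Set.subset_def] using fun i _ => he i

end PrefixNormalClosure

theorem Group.exists_freeGroup_fin_surjective (G : Type*) [Group G] [Group.FG G] :
    ∃ (n : ℕ) (π : FreeGroup (Fin n) →* G), Function.Surjective π := by
  obtain ⟨α, _, φ, hφ⟩ := Group.fg_iff_exists_freeGroup_hom_surjective_finite.1 ‹Group.FG G›
  obtain ⟨n, ⟨e⟩⟩ := Finite.exists_equiv_fin α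
  exact ⟨n, φ.comp (FreeGroup.freeGroupCongr e).symm,
    hφ.comp (FreeGroup.freeGroupCongr e).symm.surjective⟩

/-- If every descending chain `Hom(G₁,Γ) ⊇ Hom(G₂,Γ) ⊇ ⋯` coming from a
sequence of epimorphisms `G₁ → G₂ → ⋯` of finitely generated groups eventually
stabilizes (i.e. each precomposition map is eventually bijective), then every finitely
generated group `G` admits a finitely presented `Γ`-approximation: a finitely presented
group `Ghat` and an epimorphism `η : Ghat → G` such that precomposition with `η` is a
bijection `Hom(G,Γ) → Hom(Ghat,Γ)`. -/
theorem stmt_3 {Γ : Type} [Group Γ]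
    (hstab : ∀ (Gs : ℕ → Type) (_ : ∀ n, Group (Gs n))
      (f : ∀ n, Gs n →* Gs (n + 1)),
      (∀ n, Function.Surjective (f n)) → (∀ n, Group.FG (Gs n)) →
      ∃ N, ∀ n, N ≤ n →
        Function.Bijective (fun h : Gs (n + 1) →* Γ => h.comp (f n)))
    (G : Type) [Group G] [Group.FG G] :
    ∃ (Ghat : Type) (_ : Group Ghat) (η : Ghat →* G),
      (∃ (k : ℕ) (rels : Finset (FreeGroup (Fin k))),
        Nonempty (Ghat ≃* PresentedGroup (rels : Set (FreeGroup (Fin k))))) ∧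
      Function.Surjective η ∧
      Function.Bijective (fun h : G →* Γ => h.comp η) := by
  obtain ⟨n, π, hπ⟩ := Group.exists_freeGroup_fin_surjective G
  obtain ⟨e, he⟩ := (Set.to_countable (π.ker : Set (FreeGroup (Fin n)))).exists_eq_range
    ⟨1, π.ker.one_mem⟩
  let S := prefixNormalClosure e
  have hS : Monotone S := prefixNormalClosure_monotone e
  have heπ (i : ℕ) : e i ∈ π.ker := by
    rw [← SetLike.mem_coe, he]
    exact Set.mem_range_self i
  obtain ⟨K, hK⟩ := hstab (fun k => FreeGroup (Fin n) ⧸ S k) inferInstance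
    (fun k => QuotientGroup.map _ _ (MonoidHom.id _) (hS k.le_succ))
    (fun k => QuotientGroup.map_surjective_of_surjective _ _ _ QuotientGroup.mk_surjective _)
    (fun k => Group.fg_of_surjective (QuotientGroup.mk'_surjective (S k)))
  have hSπ : S K ≤ π.ker := prefixNormalClosure_le heπ K
  have hη : Function.Surjective (QuotientGroup.lift (S K) π hSπ) :=
    QuotientGroup.lift_surjective_of_surjective _ _ hπ _
  -- `PresentedGroup rels` is by definition `FreeGroup _ ⧸ normalClosure rels`, i.e. `_ ⧸ S K`.
  refine ⟨_, inferInstance, QuotientGroup.lift (S K) π hSπ,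
    ⟨n, (Finset.range K).image e, ⟨MulEquiv.refl _⟩⟩, hη,
    MonoidHom.comp_bijective_of_ker_le hη fun h => QuotientGroup.ker_lift_le_ker hSπ ?_⟩
  intro x hx
  obtain ⟨i, rfl⟩ : x ∈ Set.range e := he ▸ hx
  refine QuotientGroup.le_ker_of_eventually_comp_map_surjective hS (fun m hm => (hK m hm).2)
    (fun y hy => ?_) (i + 1) (mem_prefixNormalClosure_succ e i)
  simp [(QuotientGroup.eq_one_iff y).2 hy]
end

section
/- Let Γ be a group in which the centralizer of every nontrivial element is abelian (commutative transitive) and which acts freely on a set S (e.g., on itself by left multiplication). Let c, d ∈ Γ and a, b ∈ Γ, and suppose that for two distinct positive integers j ≠ j' one has (d^b)^{-j}(c^a)^{-1}(d^b)^{j}c^a = (d^b)^{-j'}(c^a)^{-1}(d^b)^{j'}c^a, where x^y denotes y x y^{-1}. If d^b ≠ 1, then c^a commutes with d^b. -/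
/-!
Cancelling `c^a` on the right, the hypothesis says that conjugation by `(d^b)^j` and by
`(d^b)^{j'}` agree on `(c^a)⁻¹`, so `c^a` commutes with `(d^b)^{j'-j}`. By torsion-freeness this
power is nontrivial, and `d^b` commutes with it too; commutative transitivity finishes.
-/

theorem commute_mul_inv_of_conj_eq {G : Type*} [Group G] {g x y : G}
    (h : x⁻¹ * g * x = y⁻¹ * g * y) : Commute (y * x⁻¹) g := by
  calc y * x⁻¹ * g = y * (x⁻¹ * g * x) * x⁻¹ := by group
    _ = y * (y⁻¹ * g * y) * x⁻¹ := by rw [h]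
    _ = g * (y * x⁻¹) := by group

theorem zpow_ne_one_of_pow_ne_one {G : Type*} [Group G] {g : G}
    (htf : ∀ k : ℕ, k ≠ 0 → g ^ k ≠ 1) {m : ℤ} (hm : m ≠ 0) : g ^ m ≠ 1 := by
  rcases Int.natAbs_eq m with he | he <;> rw [he]
  · rw [zpow_natCast]
    exact htf _ (Int.natAbs_ne_zero.mpr hm)
  · rw [zpow_neg, zpow_natCast, ne_eq, inv_eq_one]
    exact htf _ (Int.natAbs_ne_zero.mpr hm)

theorem commute_of_commute_zpow_of_commTransitive {G : Type*} [Group G]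
    (hCT : ∀ g : G, g ≠ 1 → ∀ x y : G, Commute x g → Commute y g → Commute x y)
    {x d : G} {m : ℤ} (hdm : d ^ m ≠ 1) (h : Commute x (d ^ m)) : Commute x d :=
  hCT (d ^ m) hdm x d h ((Commute.refl d).zpow_right m)

theorem stmt_4_general {Γ : Type} [Group Γ]
    (hCT : ∀ g : Γ, g ≠ 1 → ∀ x y : Γ, Commute x g → Commute y g → Commute x y)
    (htf : ∀ g : Γ, g ≠ 1 → ∀ k : ℕ, k ≠ 0 → g ^ k ≠ 1)
    (a b c d : Γ) (j j' : ℕ) (hjj' : j ≠ j')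
    (heq : (b * d * b⁻¹) ^ (-(j : ℤ)) * (a * c * a⁻¹)⁻¹ * (b * d * b⁻¹) ^ (j : ℤ) *
        (a * c * a⁻¹) =
      (b * d * b⁻¹) ^ (-(j' : ℤ)) * (a * c * a⁻¹)⁻¹ * (b * d * b⁻¹) ^ (j' : ℤ) *
        (a * c * a⁻¹))
    (hd : b * d * b⁻¹ ≠ 1) :
    Commute (a * c * a⁻¹) (b * d * b⁻¹) := by
  set D := b * d * b⁻¹
  set C := a * c * a⁻¹
  have hconj : (D ^ (j : ℤ))⁻¹ * C⁻¹ * D ^ (j : ℤ) = (D ^ (j' : ℤ))⁻¹ * C⁻¹ * D ^ (j' : ℤ) := by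
    simpa only [zpow_neg] using mul_right_cancel heq
  have hcomm : Commute C (D ^ ((j' : ℤ) - j)) := by
    rw [zpow_sub]
    exact Commute.inv_left_iff.mp (commute_mul_inv_of_conj_eq hconj).symm
  have hm : (j' : ℤ) - j ≠ 0 := sub_ne_zero.mpr (by exact_mod_cast hjj'.symm)
  exact commute_of_commute_zpow_of_commTransitive hCT (zpow_ne_one_of_pow_ne_one (htf D hd) hm)
    hcomm

/-- Let `Γ` be a torsion-free commutative-transitive group (centralizers of
nontrivial elements are abelian) acting freely on a set `S`.  Writing `x^y = y x y⁻¹`,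
if for two distinct positive integers `j ≠ j'` we have
`(d^b)^{-j} (c^a)⁻¹ (d^b)^j c^a = (d^b)^{-j'} (c^a)⁻¹ (d^b)^{j'} c^a`, and `d^b ≠ 1`,
then `c^a` commutes with `d^b`. -/
theorem stmt_4 {Γ S : Type} [Group Γ] [MulAction Γ S]
    (hCT : ∀ g : Γ, g ≠ 1 → ∀ x y : Γ, Commute x g → Commute y g → Commute x y)
    (hfree : ∀ γ : Γ, γ ≠ 1 → ∀ s : S, γ • s ≠ s)
    (htf : ∀ g : Γ, g ≠ 1 → ∀ k : ℕ, k ≠ 0 → g ^ k ≠ 1)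
    (a b c d : Γ) (j j' : ℕ) (hj : 0 < j) (hj' : 0 < j') (hjj' : j ≠ j')
    (heq : (b * d * b⁻¹) ^ (-(j : ℤ)) * (a * c * a⁻¹)⁻¹ * (b * d * b⁻¹) ^ (j : ℤ) *
        (a * c * a⁻¹) =
      (b * d * b⁻¹) ^ (-(j' : ℤ)) * (a * c * a⁻¹)⁻¹ * (b * d * b⁻¹) ^ (j' : ℤ) *
        (a * c * a⁻¹))
    (hd : b * d * b⁻¹ ≠ 1) :
    Commute (a * c * a⁻¹) (b * d * b⁻¹) :=
  stmt_4_general hCT htf a b c d j j' hjj' heq hd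
end

section
/- Let Γ be a group and G = A * B a free product of two nontrivial abelian groups. If Hom(G,Γ) contains a homomorphism h that is injective on A and on B with h(A), h(B) nontrivial, and Γ is a torsion-free group in which the centralizer of any non-abelian subgroup is trivial and which contains a non-abelian free subgroup, then there are infinitely many Γ-conjugacy classes of homomorphisms G → Γ. -/
/-!
Fix `a ≠ 1` in `A`, `b ≠ 1` in `B`, and put `x = h a`, `y = h b`. Twist `h` by power maps on one
factor: `Φₙ = h ∘ (powₙ * id)` and `Ψₙ = h ∘ (id * powₙ)`. If both families contained a conjugate
pair, we would get `γ` centralizing `y` with `γ xᵐ γ⁻¹ = xⁿ`, and `δ` centralizing `x` with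
`δ y^q δ⁻¹ = yᵖ`. Trivial centralizers of non-abelian subgroups make commutation transitive on
nontrivial elements. Hence `γ x γ⁻¹`, which commutes with `xⁿ ≠ 1`, commutes with `x`, so `γ`
normalizes `C(x)`; likewise `δ` normalizes `C(y)`. Then `⁅γ, δ⁆ ∈ C(x) ∩ C(y) = 1`, so `δ`
commutes with `γ ≠ 1` and therefore with `y`, and `y^q = yᵖ` contradicts torsion-freeness.
-/

open Monoid
open scoped commutatorElement

section InfiniteOrder

variable {G : Type*} [Group G] {x γ : G} {m n : ℕ}

theorem pow_ne_one_of_conj_pow_eq (hx : ¬IsOfFinOrder x) (hnm : n ≠ m)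
    (h : γ * x ^ m * γ⁻¹ = x ^ n) : x ^ n ≠ 1 := by
  intro hn
  have hm : x ^ m = 1 := conj_eq_one_iff.mp (h.trans hn)
  exact hnm (injective_pow_iff_not_isOfFinOrder.mpr hx (hn.trans hm.symm))

theorem not_commute_of_conj_pow_eq (hx : ¬IsOfFinOrder x) (hnm : n ≠ m)
    (h : γ * x ^ m * γ⁻¹ = x ^ n) : ¬Commute γ x := fun hγx =>
  hnm <| injective_pow_iff_not_isOfFinOrder.mpr hx <| show x ^ n = x ^ m by
    rw [← h, (hγx.pow_right m).eq, mul_inv_cancel_right]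

end InfiniteOrder

def IsCommTransitive (G : Type*) [Group G] : Prop :=
  ∀ ⦃z u v : G⦄, z ≠ 1 → Commute z u → Commute z v → Commute u v

section CommTransitive

variable {G : Type*} [Group G]

theorem isCommTransitive_of_centralizer_eq_bot
    (h : ∀ S : Subgroup G, (∃ x ∈ S, ∃ y ∈ S, ¬ Commute x y) →
      Subgroup.centralizer (S : Set G) = ⊥) :
    IsCommTransitive G := by
  intro z u v hz hu hv
  by_contra huv
  have hbot := h (Subgroup.centralizer {z})
    ⟨u, Subgroup.mem_centralizer_singleton_iff.mpr hu.eq.symm,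
      v, Subgroup.mem_centralizer_singleton_iff.mpr hv.eq.symm, huv⟩
  have hz_mem : z ∈ Subgroup.centralizer (Subgroup.centralizer {z} : Set G) :=
    Subgroup.mem_centralizer_iff.mpr fun w hw => Subgroup.mem_centralizer_singleton_iff.mp hw
  exact hz (Subgroup.mem_bot.mp (hbot ▸ hz_mem))

namespace IsCommTransitive

variable (hG : IsCommTransitive G) {x y γ δ u : G} {m n p q : ℕ}
include hG

theorem conj_commute (hx : x ≠ 1) (hγx : Commute (γ * x * γ⁻¹) x) (hu : Commute u x) :
    Commute (γ * u * γ⁻¹) x :=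
  hG (conj_eq_one_iff.not.mpr hx) (hu.conj γ).symm hγx

theorem commute_conj_of_conj_pow_eq (hxn : x ^ n ≠ 1) (h : γ * x ^ m * γ⁻¹ = x ^ n) :
    Commute (γ * x * γ⁻¹) x :=
  hG hxn (h ▸ (((Commute.refl x).pow_right m).conj γ).symm) ((Commute.refl x).pow_left n)

theorem commute_of_normalizes_centralizers (hxy : ¬Commute x y)
    (hγy : Commute γ y) (hγx : Commute (γ * x * γ⁻¹) x)
    (hδx : Commute δ x) (hδy : Commute (δ * y * δ⁻¹) y) : Commute γ δ := by
  have hx : x ≠ 1 := fun h => hxy (h ▸ Commute.one_left y)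
  have hy : y ≠ 1 := fun h => hxy (h ▸ Commute.one_right x)
  have hcx : Commute ⁅γ, δ⁆ x :=
    (hG.conj_commute hx hγx hδx).mul_left hδx.inv_left
  have hcy : Commute ⁅γ, δ⁆ y := by
    rw [commutatorElement_def, mul_assoc γ, mul_assoc γ]
    exact hγy.mul_left (by simpa only [mul_assoc] using hG.conj_commute hy hδy hγy.inv_left)
  by_contra hγδ
  exact hxy (hG (mt commutatorElement_eq_one_iff_commute.mp hγδ) hcx hcy)

theorem false_of_conj_pow_eq (hx : ¬IsOfFinOrder x) (hy : ¬IsOfFinOrder y)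
    (hnm : n ≠ m) (hpq : p ≠ q)
    (hγx : γ * x ^ m * γ⁻¹ = x ^ n) (hγy : Commute γ y)
    (hδy : δ * y ^ q * δ⁻¹ = y ^ p) (hδx : Commute δ x) : False := by
  have hγx' := not_commute_of_conj_pow_eq hx hnm hγx
  have hδy' := not_commute_of_conj_pow_eq hy hpq hδy
  have hy1 : y ≠ 1 := fun h => hy (h ▸ IsOfFinOrder.one)
  have hxy : ¬Commute x y := fun hxy => hγx' (hG hy1 hγy.symm hxy.symm)
  have hγδ : Commute γ δ := hG.commute_of_normalizes_centralizers hxy hγy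
    (hG.commute_conj_of_conj_pow_eq (pow_ne_one_of_conj_pow_eq hx hnm hγx) hγx) hδx
    (hG.commute_conj_of_conj_pow_eq (pow_ne_one_of_conj_pow_eq hy hpq hδy) hδy)
  have hγ1 : γ ≠ 1 := fun h => hγx' (h ▸ Commute.one_left x)
  exact hδy' (hG hγ1 hγδ hγy)

end IsCommTransitive

end CommTransitive

theorem stmt_19_general {A B Γ : Type} [CommGroup A] [CommGroup B] [Group Γ]
    [Nontrivial A] [Nontrivial B]
    (htf : ∀ x : Γ, x ≠ 1 → ¬ IsOfFinOrder x)
    (hcent : ∀ S : Subgroup Γ, (∃ x ∈ S, ∃ y ∈ S, ¬ Commute x y) →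
      Subgroup.centralizer (S : Set Γ) = ⊥)
    (h : Coprod A B →* Γ)
    (hA : Function.Injective (h.comp Coprod.inl))
    (hB : Function.Injective (h.comp Coprod.inr)) :
    ∃ φ : ℕ → (Coprod A B →* Γ),
      ∀ n m, n ≠ m → ∀ γ : Γ, φ n ≠ (MulAut.conj γ).toMonoidHom.comp (φ m) := by
  obtain ⟨a, ha⟩ := exists_ne (1 : A)
  obtain ⟨b, hb⟩ := exists_ne (1 : B)
  have hx : h (Coprod.inl a) ≠ 1 := (map_ne_one_iff _ hA).mpr ha
  have hy : h (Coprod.inr b) ≠ 1 := (map_ne_one_iff _ hB).mpr hb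
  by_contra! hconj
  obtain ⟨n, m, hnm, γ, hγ⟩ :=
    hconj fun n => h.comp (Coprod.map (powMonoidHom n) (MonoidHom.id B))
  obtain ⟨p, q, hpq, δ, hδ⟩ :=
    hconj fun n => h.comp (Coprod.map (MonoidHom.id A) (powMonoidHom n))
  have hγa := DFunLike.congr_fun hγ (Coprod.inl a)
  have hγb := DFunLike.congr_fun hγ (Coprod.inr b)
  have hδa := DFunLike.congr_fun hδ (Coprod.inl a)
  have hδb := DFunLike.congr_fun hδ (Coprod.inr b)
  simp only [MonoidHom.comp_apply, Coprod.map_apply_inl, Coprod.map_apply_inr, powMonoidHom_apply,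
    MonoidHom.id_apply, map_pow, MulEquiv.coe_toMonoidHom, MulAut.conj_apply, conj_pow]
    at hγa hγb hδa hδb
  exact (isCommTransitive_of_centralizer_eq_bot hcent).false_of_conj_pow_eq
    (htf _ hx) (htf _ hy) hnm hpq hγa.symm (mul_inv_eq_iff_eq_mul.mp hγb.symm)
    hδb.symm (mul_inv_eq_iff_eq_mul.mp hδa.symm)

/-- Let `G = A * B` be a free product of two nontrivial abelian groups,
and let `Γ` be a torsion-free group in which the centralizer of any non-abelian
subgroup is trivial and which contains a non-abelian free subgroup.  If there is a
homomorphism `h : G → Γ` injective on `A` and on `B` (with nontrivial images), then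
there are infinitely many `Γ`-conjugacy classes of homomorphisms `G → Γ`. -/
theorem stmt_19 {A B Γ : Type} [CommGroup A] [CommGroup B] [Group Γ]
    [Nontrivial A] [Nontrivial B]
    (htf : ∀ x : Γ, x ≠ 1 → ¬ IsOfFinOrder x)
    (hcent : ∀ S : Subgroup Γ, (∃ x ∈ S, ∃ y ∈ S, ¬ Commute x y) →
      Subgroup.centralizer (S : Set Γ) = ⊥)
    (hfree : ∃ f : FreeGroup (Fin 2) →* Γ, Function.Injective f)
    (h : Coprod A B →* Γ)
    (hA : Function.Injective (h.comp Coprod.inl))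
    (hB : Function.Injective (h.comp Coprod.inr)) :
    ∃ φ : ℕ → (Coprod A B →* Γ),
      ∀ n m, n ≠ m → ∀ γ : Γ, φ n ≠ (MulAut.conj γ).toMonoidHom.comp (φ m) :=
  stmt_19_general htf hcent h hA hB
end
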